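/- Key step of Proposition 2 (bounded case): from equality of heat semigroups to equality of wave propagators. Let H₁, H₂ be complex Hilbert spaces, A_j a bounded selfadjoint nonnegative linear operator on H_j for j = 1,2, D a complex Banach space, and B_j : H_j → D a bounded linear operator. Let f₁ ∈ H₁ and f₂ ∈ H₂. If B₁ e^{−tA₁} f₁ = B₂ e^{−tA₂} f₂ for every t > 0, then B₁ S(τ, A₁) f₁ = B₂ S(τ, A₂) f₂ for every τ > 0. -/

import Mathlib

open Set MeasureTheory Real

/-- `S(τ, A)`: the continuous functional calculus of `A` applied to the continuous function
`x ↦ sin(τ√x)/√x` on `[0,∞)`, extended by its limiting value `τ` at `x = 0`. -/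
noncomputable def waveKernel {H : Type*} [NormedAddCommGroup H] [InnerProductSpace ℂ H]
    [CompleteSpace H] (τ : ℝ) (A : H →L[ℂ] H) : H →L[ℂ] H :=
  cfc (fun x : ℝ => if x = 0 then τ else Real.sin (τ * Real.sqrt x) / Real.sqrt x) A

/-- `e^{−tA}`: the continuous functional calculus of `A` applied to `x ↦ e^{−tx}`. -/
noncomputable def heatOp {H : Type*} [NormedAddCommGroup H] [InnerProductSpace ℂ H]
    [CompleteSpace H] (t : ℝ) (A : H →L[ℂ] H) : H →L[ℂ] H :=
  cfc (fun x : ℝ => Real.exp (-(t * x))) A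

/-!
Take an interval `[0, a]` containing both spectra. The functional
`g ↦ B₁ (g(A₁) f₁) - B₂ (g(A₂) f₂)` on `C([0, a], ℝ)` is bounded, since the functional calculus
is isometric, and by hypothesis it vanishes on `e^{-(n+1)x}` for all `n`. As `e^{-x}` separates
points and is invertible, Stone–Weierstrass forces the functional to vanish identically. The wave
kernel `sin(τ√x)/√x = τ sinc(τ√x)` is continuous on `[0, ∞)`, so it is one of these `g`.
-/

section Density

variable {X E : Type*} [TopologicalSpace X] [CompactSpace X]
  [NormedAddCommGroup E] [NormedSpace ℝ E]

lemma ContinuousMap.dense_adjoin_singleton_of_injective {h : C(X, ℝ)}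
    (hinj : Function.Injective h) : Dense (Algebra.adjoin ℝ {h} : Set C(X, ℝ)) := by
  have hsep : (Algebra.adjoin ℝ {h}).SeparatesPoints := fun x y hxy =>
    ⟨h, ⟨h, Algebra.subset_adjoin rfl, rfl⟩, hinj.ne hxy⟩
  rw [dense_iff_closure_eq, ← Subalgebra.topologicalClosure_coe,
    ContinuousMap.subalgebra_topologicalClosure_eq_top_of_separatesPoints _ hsep,
    Algebra.coe_top]

/-- `h` is a unit, so `Φ (h * ·)` vanishes on all powers of `h`, `h ^ 0` included, and
Stone–Weierstrass applies to it. -/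
lemma ContinuousLinearMap.eq_zero_of_map_pow_succ_eq_zero {h : C(X, ℝ)}
    (hinj : Function.Injective h) (hne : ∀ x, h x ≠ 0) {Φ : C(X, ℝ) →L[ℝ] E}
    (hΦ : ∀ n : ℕ, Φ (h ^ (n + 1)) = 0) : Φ = 0 := by
  have hmul : Φ.comp (ContinuousLinearMap.mul ℝ C(X, ℝ) h) = 0 := by
    refine ContinuousLinearMap.ext_on (s := Submonoid.closure {h}) ?_ ?_
    · rw [← Algebra.adjoin_eq_span]
      exact ContinuousMap.dense_adjoin_singleton_of_injective hinj
    · rintro _ hg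
      rw [← Submonoid.powers_eq_closure] at hg
      obtain ⟨n, rfl⟩ := hg
      simpa [← pow_succ'] using hΦ n
  ext1 g
  obtain ⟨u, rfl⟩ := (ContinuousMap.isUnit_iff_forall_ne_zero h).2 hne
  simpa using congr($hmul (↑u⁻¹ * g))

end Density

section CfcIcc

variable {A : Type*} [NormedRing A] [StarRing A] [NormedAlgebra ℝ A] {p : A → Prop}
  [IsometricContinuousFunctionalCalculus ℝ A p]

noncomputable def cfcIcc {a b : ℝ} (hab : a ≤ b) (x : A) : C(Icc a b, ℝ) →L[ℝ] A :=
  LinearMap.mkContinuous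
    { toFun := fun g => cfc (IccExtend hab g) x
      map_add' := fun g g' => cfc_add x (IccExtend hab g) (IccExtend hab g')
      map_smul' := fun c g => cfc_smul c (IccExtend hab g) x }
    1 fun g => by
      rw [one_mul]
      exact norm_cfc_le (norm_nonneg g) fun _ _ => g.norm_coe_le_norm _

lemma cfcIcc_apply_eq_cfc {a b : ℝ} (hab : a ≤ b) {x : A} (hx : spectrum ℝ x ⊆ Icc a b)
    {g : C(Icc a b, ℝ)} (f : ℝ → ℝ) (hfg : ∀ y : Icc a b, g y = f y) :
    cfcIcc hab x g = cfc f x :=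
  cfc_congr fun _ hy => (IccExtend_of_mem hab g (hx hy)).trans (hfg _)

end CfcIcc

lemma spectrum_subset_Icc_norm_of_nonneg {A : Type*} [CStarAlgebra A] [PartialOrder A]
    [StarOrderedRing A] {x : A} (hx : 0 ≤ x) : spectrum ℝ x ⊆ Icc 0 ‖x‖ := by
  nontriviality A
  intro y hy
  exact ⟨spectrum_nonneg_of_nonneg hx hy, (le_abs_self y).trans (spectrum.norm_le_norm_of_mem hy)⟩

theorem map_cfc_eq_of_forall_map_cfc_exp_eq {A₁ A₂ D : Type*}
    [NormedRing A₁] [StarRing A₁] [NormedAlgebra ℝ A₁] {p₁ : A₁ → Prop}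
    [IsometricContinuousFunctionalCalculus ℝ A₁ p₁]
    [NormedRing A₂] [StarRing A₂] [NormedAlgebra ℝ A₂] {p₂ : A₂ → Prop}
    [IsometricContinuousFunctionalCalculus ℝ A₂ p₂]
    [NormedAddCommGroup D] [NormedSpace ℝ D]
    {a b : ℝ} (hab : a ≤ b) {x₁ : A₁} {x₂ : A₂}
    (hx₁ : spectrum ℝ x₁ ⊆ Icc a b) (hx₂ : spectrum ℝ x₂ ⊆ Icc a b)
    (L₁ : A₁ →L[ℝ] D) (L₂ : A₂ →L[ℝ] D)
    (hexp : ∀ n : ℕ, L₁ (cfc (fun y => exp (-((n + 1) * y))) x₁) =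
      L₂ (cfc (fun y => exp (-((n + 1) * y))) x₂))
    {f : ℝ → ℝ} (hf : ContinuousOn f (Icc a b)) :
    L₁ (cfc f x₁) = L₂ (cfc f x₂) := by
  let h : C(Icc a b, ℝ) := ⟨fun y => exp (-y), by fun_prop⟩
  have hinj : Function.Injective h := fun y z hyz =>
    Subtype.ext (neg_injective (exp_injective hyz))
  have hpow (n : ℕ) (y : Icc a b) : (h ^ (n + 1)) y = exp (-((n + 1) * y)) := by
    change exp (-(y : ℝ)) ^ (n + 1) = _
    rw [← exp_nat_mul]
    push_cast
    ring_nf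
  have hΦ : L₁.comp (cfcIcc hab x₁) - L₂.comp (cfcIcc hab x₂) = 0 := by
    refine ContinuousLinearMap.eq_zero_of_map_pow_succ_eq_zero hinj (fun _ => (exp_pos _).ne')
      fun n => ?_
    simp [cfcIcc_apply_eq_cfc hab hx₁ (fun y => exp (-((n + 1) * y))) (hpow n),
      cfcIcc_apply_eq_cfc hab hx₂ (fun y => exp (-((n + 1) * y))) (hpow n), hexp n]
  let g : C(Icc a b, ℝ) := ⟨(Icc a b).domRestrict f, hf.domRestrict⟩
  have hg (y : Icc a b) : g y = f y := rfl
  simpa [sub_eq_zero, cfcIcc_apply_eq_cfc hab hx₁ f hg, cfcIcc_apply_eq_cfc hab hx₂ f hg]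
    using congr($hΦ g)

lemma ite_sin_mul_sqrt_div_sqrt_eq_mul_sinc (τ : ℝ) {x : ℝ} (hx : 0 ≤ x) :
    (if x = 0 then τ else sin (τ * √x) / √x) = τ * sinc (τ * √x) := by
  rcases hx.eq_or_lt with rfl | hx
  · simp
  rcases eq_or_ne τ 0 with rfl | hτ
  · simp
  have hsqrt : √x ≠ 0 := (sqrt_pos.2 hx).ne'
  rw [if_neg hx.ne', sinc_of_ne_zero (mul_ne_zero hτ hsqrt)]
  field_simp

lemma continuousOn_ite_sin_mul_sqrt_div_sqrt (τ : ℝ) :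
    ContinuousOn (fun x => if x = 0 then τ else sin (τ * √x) / √x) (Ici 0) :=
  (continuous_const.mul (continuous_sinc.comp (continuous_const.mul continuous_sqrt))).continuousOn
    |>.congr fun _ hx => ite_sin_mul_sqrt_div_sqrt_eq_mul_sinc τ hx

/-- **Key step of Proposition 2 (bounded case):** from equality of heat semigroups to equality of
wave propagators. If `B₁ e^{−tA₁} f₁ = B₂ e^{−tA₂} f₂` for every `t > 0`, then
`B₁ S(τ, A₁) f₁ = B₂ S(τ, A₂) f₂` for every `τ > 0`. -/
theorem heat_to_wave
    {H₁ H₂ : Type*}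
    [NormedAddCommGroup H₁] [InnerProductSpace ℂ H₁] [CompleteSpace H₁]
    [NormedAddCommGroup H₂] [InnerProductSpace ℂ H₂] [CompleteSpace H₂]
    {D : Type*} [NormedAddCommGroup D] [NormedSpace ℂ D]
    (A₁ : H₁ →L[ℂ] H₁) (hA₁ : A₁.IsPositive)
    (A₂ : H₂ →L[ℂ] H₂) (hA₂ : A₂.IsPositive)
    (B₁ : H₁ →L[ℂ] D) (B₂ : H₂ →L[ℂ] D)
    (f₁ : H₁) (f₂ : H₂)
    (heq : ∀ t : ℝ, 0 < t → B₁ (heatOp t A₁ f₁) = B₂ (heatOp t A₂ f₂)) :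
    ∀ τ : ℝ, 0 < τ → B₁ (waveKernel τ A₁ f₁) = B₂ (waveKernel τ A₂ f₂) := by
  intro τ _
  have hσ₁ : spectrum ℝ A₁ ⊆ Icc 0 (max ‖A₁‖ ‖A₂‖) :=
    (spectrum_subset_Icc_norm_of_nonneg (A₁.nonneg_iff_isPositive.2 hA₁)).trans
      (Icc_subset_Icc_right (le_max_left _ _))
  have hσ₂ : spectrum ℝ A₂ ⊆ Icc 0 (max ‖A₁‖ ‖A₂‖) :=
    (spectrum_subset_Icc_norm_of_nonneg (A₂.nonneg_iff_isPositive.2 hA₂)).trans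
      (Icc_subset_Icc_right (le_max_right _ _))
  exact map_cfc_eq_of_forall_map_cfc_exp_eq (by positivity) hσ₁ hσ₂
    ((B₁.comp (ContinuousLinearMap.apply ℂ H₁ f₁)).restrictScalars ℝ)
    ((B₂.comp (ContinuousLinearMap.apply ℂ H₂ f₂)).restrictScalars ℝ)
    (fun n => heq (n + 1) (by positivity))
    ((continuousOn_ite_sin_mul_sqrt_div_sqrt τ).mono Icc_subset_Ici_self)
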